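/- At p₀ = (1,0,0,0) ∈ S⁷, for the irreducible SU(2)-action, the tangent vectors are E₁* = (0,0,0,−√3), E₂* = (0,0,0,√3i), E₃* = (3i,0,0,0), and with respect to the squashed metric g̃ and 3-form φ̃ one has φ̃(E₁*, E₂*, E₃*) = −243/25 = −|E₁*|_g̃ |E₂*|_g̃ |E₃*|_g̃; hence the orbit SU(2)·p₀ (with reversed orientation) is associative. -/

import Mathlib

/-!
E₁* and E₂* are horizontal (all ηⱼ vanish on them), so on them g̃ is just (9/5)g and
φ̃(E₁*, E₂*, ·) collapses to (27/25) Σⱼ ωⱼ(E₁*, E₂*) ηⱼ. Only ω₁(E₁*, E₂*) = 3 survives, and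
η₁(E₃*) = −3 gives φ̃(E₁*, E₂*, E₃*) = −243/25, while |E₁*|²_g̃ = |E₂*|²_g̃ = 27/5 and
|E₃*|²_g̃ = (9/5 − 36/25)·9 = 81/25.
-/

open Complex

namespace SquashedA2

/-- The real inner product Re⟨u,v⟩ on ℂ⁴ ≅ ℝ⁸ (the round metric g at a point). -/
noncomputable def reInner (u v : Fin 4 → ℂ) : ℝ :=
  (∑ i, (starRingEnd ℂ) (u i) * v i).re

/-- The contact coframe η₁, η₂, η₃ at p₀ = (1,0,0,0):
η₁ = Im(Σ zⱼ dz̄ⱼ), η₂ + iη₃ = −z₁dz₂ + z₂dz₁ − z₃dz₄ + z₄dz₃ evaluated at p₀. -/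
noncomputable def η : Fin 3 → (Fin 4 → ℂ) → ℝ :=
  ![fun v => -(v 0).im, fun v => -(v 1).re, fun v => -(v 1).im]

/-- The horizontal coframe X⁰, X¹, X², X³ at p₀, dual to the g-orthonormal horizontal
frame X₀ = (0,0,0,1), X₁ = Φ₁X₀ = (0,0,0,i), X₂ = Φ₂X₀ = (0,0,−1,0),
X₃ = Φ₃X₀ = (0,0,−i,0): Xʲ(v) = g(Xⱼ, v). -/
noncomputable def Xc : Fin 4 → (Fin 4 → ℂ) → ℝ :=
  ![fun v => (v 3).re, fun v => (v 3).im, fun v => -(v 2).re, fun v => -(v 2).im]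

/-- The squashed metric g̃(E,F) = −(36/25)Σⱼ ηⱼ(E)ηⱼ(F) + (9/5)g(E,F) at p₀. -/
noncomputable def gt (u v : Fin 4 → ℂ) : ℝ :=
  -(36 / 25) * (∑ j, η j u * η j v) + (9 / 5) * reInner u v

/-- wedge of two 1-forms -/
noncomputable def w11 (α β : (Fin 4 → ℂ) → ℝ) (u v : Fin 4 → ℂ) : ℝ :=
  α u * β v - α v * β u

/-- wedge of a 1-form and a 2-form -/
noncomputable def w12 (α : (Fin 4 → ℂ) → ℝ) (β : (Fin 4 → ℂ) → (Fin 4 → ℂ) → ℝ)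
    (u v w : Fin 4 → ℂ) : ℝ :=
  α u * β v w - α v * β u w + α w * β u v

/-- The horizontal 2-forms ω₁ = −(X⁰¹+X²³), ω₂ = −(X⁰²+X³¹), ω₃ = −(X⁰³+X¹²) at p₀. -/
noncomputable def ω : Fin 3 → (Fin 4 → ℂ) → (Fin 4 → ℂ) → ℝ :=
  ![fun u v => -(w11 (Xc 0) (Xc 1) u v + w11 (Xc 2) (Xc 3) u v),
    fun u v => -(w11 (Xc 0) (Xc 2) u v + w11 (Xc 3) (Xc 1) u v),
    fun u v => -(w11 (Xc 0) (Xc 3) u v + w11 (Xc 1) (Xc 2) u v)]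

/-- The squashed 3-form φ̃ = (27/25)((1/5)η₁₂₃ + Σᵢ ηᵢ∧ωᵢ) at p₀. -/
noncomputable def φt (u v w : Fin 4 → ℂ) : ℝ :=
  (27 / 25) * ((1 / 5) * w12 (η 0) (w11 (η 1) (η 2)) u v w
    + w12 (η 0) (ω 0) u v w + w12 (η 1) (ω 1) u v w + w12 (η 2) (ω 2) u v w)

def IsHorizontal (v : Fin 4 → ℂ) : Prop :=
  ∀ j, η j v = 0

lemma isHorizontal_of_apply_zero_of_apply_one {v : Fin 4 → ℂ} (h₀ : v 0 = 0) (h₁ : v 1 = 0) :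
    IsHorizontal v := by
  intro j
  fin_cases j <;> simp [η, h₀, h₁]

lemma reInner_eq_sum (u v : Fin 4 → ℂ) :
    reInner u v = ∑ i, ((u i).re * (v i).re + (u i).im * (v i).im) := by
  simp only [reInner, Complex.re_sum, Complex.mul_re, Complex.conj_re, Complex.conj_im]
  congr 1 with i
  ring

lemma gt_of_isHorizontal_left {u : Fin 4 → ℂ} (hu : IsHorizontal u) (v : Fin 4 → ℂ) :
    gt u v = 9 / 5 * reInner u v := by
  simp [gt, hu _]

lemma φt_of_isHorizontal {u v : Fin 4 → ℂ} (hu : IsHorizontal u) (hv : IsHorizontal v)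
    (w : Fin 4 → ℂ) :
    φt u v w = 27 / 25 * ∑ j, η j w * ω j u v := by
  simp [φt, w12, w11, hu _, hv _, Fin.sum_univ_three]

theorem A2_associative :
    let E₁ : Fin 4 → ℂ := ![0, 0, 0, -(Real.sqrt 3 : ℝ)]
    let E₂ : Fin 4 → ℂ := ![0, 0, 0, (Real.sqrt 3 : ℝ) * I]
    let E₃ : Fin 4 → ℂ := ![3 * I, 0, 0, 0]
    gt E₁ E₂ = 0 ∧ gt E₁ E₃ = 0 ∧ gt E₂ E₃ = 0 ∧
    φt E₁ E₂ E₃ = -(243 / 25) ∧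
    φt E₁ E₂ E₃ =
      -(Real.sqrt (gt E₁ E₁) * Real.sqrt (gt E₂ E₂) * Real.sqrt (gt E₃ E₃)) := by
  intro E₁ E₂ E₃
  have h₁ : IsHorizontal E₁ := isHorizontal_of_apply_zero_of_apply_one rfl rfl
  have h₂ : IsHorizontal E₂ := isHorizontal_of_apply_zero_of_apply_one rfl rfl
  have hsqrt3 : Real.sqrt 3 * Real.sqrt 3 = 3 := Real.mul_self_sqrt (by norm_num)
  have hg₁ : gt E₁ E₁ = 27 / 5 := by
    rw [gt_of_isHorizontal_left h₁, reInner_eq_sum]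
    simp [E₁, Fin.sum_univ_four, hsqrt3]
    norm_num
  have hg₂ : gt E₂ E₂ = 27 / 5 := by
    rw [gt_of_isHorizontal_left h₂, reInner_eq_sum]
    simp [E₂, Fin.sum_univ_four, hsqrt3]
    norm_num
  have hg₃ : gt E₃ E₃ = (9 / 5) ^ 2 := by
    simp [gt, η, reInner_eq_sum, E₃, Fin.sum_univ_four, Fin.sum_univ_three]
    norm_num
  have hφ : φt E₁ E₂ E₃ = -(243 / 25) := by
    rw [φt_of_isHorizontal h₁ h₂]
    simp [η, ω, w11, Xc, E₁, E₂, E₃, Fin.sum_univ_three, hsqrt3]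
    norm_num
  refine ⟨?_, ?_, ?_, hφ, ?_⟩
  · rw [gt_of_isHorizontal_left h₁, reInner_eq_sum]; simp [E₁, E₂, Fin.sum_univ_four]
  · rw [gt_of_isHorizontal_left h₁, reInner_eq_sum]; simp [E₁, E₃, Fin.sum_univ_four]
  · rw [gt_of_isHorizontal_left h₂, reInner_eq_sum]; simp [E₂, E₃, Fin.sum_univ_four]
  · rw [hφ, hg₁, hg₂, hg₃, Real.mul_self_sqrt (by norm_num), Real.sqrt_sq (by norm_num)]
    norm_num

end SquashedA2
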